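/- Let V be a real normed vector space and A a hyperbolic continuous linear operator (i.e. ‖exp(tA) v‖ ≤ exp(-a t)‖v‖ for all t ≥ 0 with a > 0). Then the crossing-time function t_A : V \ {0} → ℝ, defined by ‖exp(t_A(v) A) v‖ = 1, is continuous. -/

import Mathlib

/-!
For `v ≠ 0` the contraction bound makes `t ↦ ‖exp (t • A) v‖` strictly decreasing, so
`t_A v < t ↔ ‖exp (t • A) v‖ < 1` and `t < t_A v ↔ 1 < ‖exp (t • A) v‖`. For fixed `t` both
right-hand sides are open conditions on `v`, which is exactly continuity of `t_A`.
-/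

open NormedSpace

theorem continuousOn_of_strictAnti_of_apply_eq {X α β : Type*} [TopologicalSpace X]
    [LinearOrder α] [TopologicalSpace α] [OrderTopology α]
    [LinearOrder β] [TopologicalSpace β] [OrderClosedTopology β]
    {F : α → X → β} {τ : X → α} {S : Set X} {c : β}
    (hF : ∀ t, ContinuousOn (F t) S) (hanti : ∀ x ∈ S, StrictAnti (F · x))
    (hτ : ∀ x ∈ S, F (τ x) x = c) : ContinuousOn τ S := by
  intro x hx
  refine tendsto_order.2 ⟨fun b hb => ?_, fun b hb => ?_⟩
  · have hc : c < F b x := hτ x hx ▸ hanti x hx hb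
    filter_upwards [self_mem_nhdsWithin, (hF b x hx).eventually (isOpen_Ioi.mem_nhds hc)]
      with y hy hcy
    exact (hanti y hy).lt_iff_gt.1 (hτ y hy ▸ hcy)
  · have hc : F b x < c := hτ x hx ▸ hanti x hx hb
    filter_upwards [self_mem_nhdsWithin, (hF b x hx).eventually (isOpen_Iio.mem_nhds hc)]
      with y hy hcy
    exact (hanti y hy).lt_iff_gt.1 (hτ y hy ▸ hcy)

theorem NormedSpace.exp_add_smul {𝔸 : Type*} [NormedRing 𝔸] [NormedAlgebra ℝ 𝔸] [CompleteSpace 𝔸]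
    (A : 𝔸) (s t : ℝ) : exp ((s + t) • A) = exp (s • A) * exp (t • A) := by
  have hball (x : 𝔸) : x ∈ Metric.eball 0 (expSeries ℝ 𝔸).radius :=
    (expSeries_radius_eq_top ℝ 𝔸).symm ▸ edist_lt_top _ _
  rw [add_smul]
  exact exp_add_of_commute_of_mem_ball (((Commute.refl A).smul_left s).smul_right t)
    (hball _) (hball _)

section Flow

variable {V : Type*} [NormedAddCommGroup V] [NormedSpace ℝ V] [CompleteSpace V] (A : V →L[ℝ] V)

theorem NormedSpace.exp_smul_apply_ne_zero {v : V} (hv : v ≠ 0) (t : ℝ) : exp (t • A) v ≠ 0 := by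
  intro h
  have hinv : exp ((-t) • A) (exp (t • A) v) = v := by
    rw [← mul_apply_eq_comp, ← exp_add_smul A, neg_add_cancel, zero_smul, exp_zero,
      one_apply_eq_self]
  rw [h, map_zero] at hinv
  exact hv hinv.symm

variable {A} {a : ℝ}

theorem norm_exp_smul_apply_le_of_le
    (hyp : ∀ t : ℝ, 0 ≤ t → ∀ v : V, ‖exp (t • A) v‖ ≤ Real.exp (-a * t) * ‖v‖)
    (v : V) {s t : ℝ} (hst : s ≤ t) :
    ‖exp (t • A) v‖ ≤ Real.exp (-a * (t - s)) * ‖exp (s • A) v‖ := by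
  have hsplit : exp (t • A) v = exp ((t - s) • A) (exp (s • A) v) := by
    rw [← mul_apply_eq_comp, ← exp_add_smul A, sub_add_cancel]
  exact hsplit ▸ hyp (t - s) (sub_nonneg.2 hst) _

theorem strictAnti_norm_exp_smul_apply (ha : 0 < a)
    (hyp : ∀ t : ℝ, 0 ≤ t → ∀ v : V, ‖exp (t • A) v‖ ≤ Real.exp (-a * t) * ‖v‖)
    {v : V} (hv : v ≠ 0) : StrictAnti fun t : ℝ => ‖exp (t • A) v‖ := by
  intro s t hst
  have hcontract : Real.exp (-a * (t - s)) < 1 :=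
    Real.exp_lt_one_iff.2 (by nlinarith)
  have hpos : 0 < ‖exp (s • A) v‖ := norm_pos_iff.2 (exp_smul_apply_ne_zero A hv s)
  calc ‖exp (t • A) v‖ ≤ Real.exp (-a * (t - s)) * ‖exp (s • A) v‖ :=
        norm_exp_smul_apply_le_of_le hyp v hst.le
    _ < ‖exp (s • A) v‖ := mul_lt_of_lt_one_left hpos hcontract

end Flow

/-- The crossing-time function `t_A` is continuous on `V \ {0}`. -/
theorem stmt3 {V : Type*} [NormedAddCommGroup V] [NormedSpace ℝ V] [CompleteSpace V]
    (A : V →L[ℝ] V) (a : ℝ) (ha : 0 < a)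
    (hyp : ∀ t : ℝ, 0 ≤ t → ∀ v : V, ‖exp (t • A) v‖ ≤ Real.exp (-a * t) * ‖v‖)
    (tA : V → ℝ) (htA : ∀ v : V, v ≠ 0 → ‖exp (tA v • A) v‖ = 1) :
    ContinuousOn tA {v : V | v ≠ 0} :=
  continuousOn_of_strictAnti_of_apply_eq (F := fun t v => ‖exp (t • A) v‖)
    (fun t => (exp (t • A)).continuous.norm.continuousOn)
    (fun _ hv => strictAnti_norm_exp_smul_apply ha hyp hv) htA
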